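/- For every real number ρ, setting η_n := 2·a_n·ρ^n, the formal power series identity (1 + (1/2)·Σ_{n≥1} η_n z^n) · G_ρ(z) = z · G_ρ'(z) holds in ℝ[[z]], where G_ρ(z) := 2·A(ρz/2) is the power series obtained from A by the substitution z ↦ ρz/2 (i.e. the Maclaurin series of z ↦ 2·arcsinh(ρz/2)). This is Weingart's generating function 1 + (1/2)Σ_n η_n z^n = z·(d/dz)·log(2·arcsinh(ρz/2)) for the Dirac eta invariants η_n of the (2n−1)-dimensional Berger spheres with squashing parameter ρ. -/

import Mathlib

open PowerSeries

/-- Formal derivative of a real power series. -/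
noncomputable def D (f : PowerSeries ℝ) : PowerSeries ℝ :=
  PowerSeries.mk fun n => ((n + 1 : ℕ) : ℝ) * PowerSeries.coeff (R := ℝ) (n + 1) f

/-- The power series `2·sinh(t/2) = exp(t/2) − exp(−t/2)` over `ℚ`. -/
noncomputable def twoSinhHalf : PowerSeries ℚ :=
  PowerSeries.rescale (1 / 2 : ℚ) (PowerSeries.exp ℚ)
    - PowerSeries.rescale (-(1 / 2) : ℚ) (PowerSeries.exp ℚ)

/-- The Maclaurin series of `arcsinh` over `ℝ`:
`A(z) = Σ_{k≥0} (−1)^k (2k)!/(4^k (k!)² (2k+1)) z^{2k+1}`. -/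
noncomputable def arsinhSeriesR : PowerSeries ℝ :=
  PowerSeries.mk fun k =>
    if Odd k then
      (-1 : ℝ) ^ (k / 2) * (Nat.factorial (k - 1) : ℝ) / (4 ^ (k / 2) * (Nat.factorial (k / 2) : ℝ) ^ 2 * k)
    else 0

/-!
Write `s = 2 sinh(t/2)`, so that `φ = t/s`, and `H(w) = 2 arsinh(w/2)`. Since
`(1 + w²) arsinh'(w)² = 1` and `cosh² = 1 + sinh²`, the derivative of `H(s(t))` is `1`,
so `H(s(t)) = t`. Lagrange inversion in residue form, `[wⁿ] L = [tⁿ] L(s) s' φⁿ⁺¹`,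
applied to `L = w H'/H` gives `[wⁿ] w H'/H = [tⁿ] φⁿ = a_n`: this is the case `ρ = 1`.
The general case is its image under `w ↦ ρ w`, which commutes with the Euler operator
`w d/dw`.
-/

namespace PowerSeries

theorem constantCoeff_rescale {R : Type*} [CommSemiring R] (a : R) (f : R⟦X⟧) :
    constantCoeff (rescale a f) = constantCoeff f := by
  rw [← coeff_zero_eq_constantCoeff_apply, coeff_rescale, pow_zero, one_mul,
    coeff_zero_eq_constantCoeff_apply]

theorem derivative_rescale {R : Type*} [CommSemiring R] (a : R) (f : R⟦X⟧) :
    d⁄dX R (rescale a f) = C a * rescale a (d⁄dX R f) := by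
  ext n
  simp only [coeff_derivative, coeff_rescale, coeff_C_mul, pow_succ]
  ring

theorem rescale_X_mul_derivative {R : Type*} [CommRing R] (a : R) (f : R⟦X⟧) :
    rescale a (X * d⁄dX R f) = X * d⁄dX R (rescale a f) := by
  rw [map_mul, rescale_X, derivative_rescale]
  ring

theorem subst_rescale {R : Type*} [CommRing R] {a : R⟦X⟧} (ha : HasSubst a) (r : R)
    (f : R⟦X⟧) :
    (rescale r f).subst a = f.subst (r • a) := by
  rw [rescale_eq_subst, subst_comp_subst_apply (HasSubst.smul_X' r) ha, subst_smul ha, subst_X ha]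

section Lagrange

variable {R : Type*} [CommRing R] {s φ : R⟦X⟧}

theorem coeff_subst_mul_eq_sum (hs : constantCoeff s = 0) (g h : R⟦X⟧) (n : ℕ) :
    coeff n (g.subst s * h) = ∑ k ∈ Finset.range (n + 1), coeff k g * coeff n (s ^ k * h) := by
  have hsub : HasSubst s := HasSubst.of_constantCoeff_zero' hs
  obtain ⟨r, hr⟩ : X ^ (n + 1) ∣ g - (trunc (n + 1) g : R⟦X⟧) :=
    X_pow_dvd_iff.mpr fun m hm => by simp [coeff_trunc, hm]
  have htail : coeff n (s ^ (n + 1) * r.subst s * h) = 0 := by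
    obtain ⟨s₁, rfl⟩ : X ∣ s := X_dvd_iff.mpr hs
    rw [mul_pow, mul_assoc, mul_assoc, coeff_X_pow_mul', if_neg (by omega)]
  conv_lhs => rw [eq_add_of_sub_eq hr]
  rw [subst_add hsub, subst_mul hsub, subst_pow hsub, subst_X hsub,
    subst_coe hsub, Polynomial.aeval_eq_sum_range' (natDegree_trunc_lt g n), add_mul, map_add,
    htail, zero_add, Finset.sum_mul, map_sum]
  refine Finset.sum_congr rfl fun k hk => ?_
  rw [coeff_trunc, if_pos (Finset.mem_range.mp hk), smul_mul_assoc, coeff_smul, smul_eq_mul]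

theorem constantCoeff_subst_of_constantCoeff_eq_zero (hs : constantCoeff s = 0) (g : R⟦X⟧) :
    constantCoeff (g.subst s) = constantCoeff g := by
  simpa using coeff_subst_mul_eq_sum hs g 1 0

-- The residue of `s' / s^(m+1)`. For `m > 0` it vanishes because
-- `s' φ^(m+1) = φ^m - X φ' φ^(m-1)` and `(φ^m)' = m φ' φ^(m-1)`.
theorem coeff_derivative_mul_pow [IsDomain R] [CharZero R] (hs : constantCoeff s = 0)
    (hφ : s * φ = X) (m : ℕ) :
    coeff m (d⁄dX R s * φ ^ (m + 1)) = if m = 0 then 1 else 0 := by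
  have hderiv : d⁄dX R s * φ = 1 - s * d⁄dX R φ := by
    have := congrArg (d⁄dX R) hφ
    rw [Derivation.leibniz, derivative_X, smul_eq_mul, smul_eq_mul] at this
    linear_combination this
  rcases m with _ | j
  · simp [hderiv, hs]
  · have hsplit : d⁄dX R s * φ ^ (j + 2) = φ ^ (j + 1) - X * (d⁄dX R φ * φ ^ j) := by
      rw [← hφ]
      linear_combination φ ^ (j + 1) * hderiv
    have hpow := congrArg (coeff j) (derivative_pow φ (j + 1))
    rw [coeff_derivative, Nat.add_sub_cancel, mul_assoc, ← map_natCast C, coeff_C_mul,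
      mul_comm (φ ^ j)] at hpow
    push_cast at hpow
    rw [hsplit, map_sub, coeff_succ_X_mul, if_neg j.succ_ne_zero, sub_eq_zero]
    exact mul_left_cancel₀ (Nat.cast_add_one_ne_zero j) (by linear_combination hpow)

theorem coeff_subst_mul_derivative_mul_pow [IsDomain R] [CharZero R] (hs : constantCoeff s = 0)
    (hφ : s * φ = X) (g : R⟦X⟧) (n : ℕ) :
    coeff n (g.subst s * d⁄dX R s * φ ^ (n + 1)) = coeff n g := by
  have hterm : ∀ k ∈ Finset.range (n + 1),
      coeff k g * coeff n (s ^ k * (d⁄dX R s * φ ^ (n + 1))) =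
        if k = n then coeff k g else 0 := by
    intro k hk
    obtain ⟨m, rfl⟩ := Nat.exists_eq_add_of_le (Nat.lt_succ_iff.mp (Finset.mem_range.mp hk))
    rw [show s ^ k * (d⁄dX R s * φ ^ (k + m + 1)) = X ^ k * (d⁄dX R s * φ ^ (m + 1)) by
        rw [← hφ]; ring,
      coeff_X_pow_mul', if_pos (by omega), Nat.add_sub_cancel_left,
      coeff_derivative_mul_pow hs hφ]
    by_cases hm : m = 0 <;> simp [hm]
  rw [mul_assoc, coeff_subst_mul_eq_sum hs, Finset.sum_congr rfl hterm, Finset.sum_ite_eq',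
    if_pos (Finset.self_mem_range_succ n)]

end Lagrange

section Field

variable {K : Type*} [Field K] [CharZero K] {s φ H : K⟦X⟧}

theorem mk_coeff_pow_mul_eq_X_mul_derivative (hs : constantCoeff s = 0) (hφ : s * φ = X)
    (hH : H.subst s = X) :
    mk (fun n => coeff n (φ ^ n)) * H = X * d⁄dX K H := by
  have hsub : HasSubst s := HasSubst.of_constantCoeff_zero' hs
  have hchain : (d⁄dX K H).subst s * d⁄dX K s = 1 := by
    rw [← derivative_subst hsub, hH, derivative_X]
  obtain ⟨Q, hHQ⟩ : X ∣ H := X_dvd_iff.mpr (by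
    rw [← constantCoeff_subst_of_constantCoeff_eq_zero hs, hH, constantCoeff_X])
  have hQ : constantCoeff Q ≠ 0 := by
    have h := congrArg constantCoeff hchain
    rw [map_mul, constantCoeff_subst_of_constantCoeff_eq_zero hs,
      ← coeff_zero_eq_constantCoeff_apply, coeff_derivative, hHQ, coeff_succ_X_mul,
      coeff_zero_eq_constantCoeff_apply, map_one] at h
    exact left_ne_zero_of_mul_eq_one (by simpa using h)
  obtain ⟨L, hL⟩ : ∃ L, L * H = X * d⁄dX K H := by
    refine ⟨d⁄dX K H * Q⁻¹, ?_⟩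
    calc d⁄dX K H * Q⁻¹ * H = X * d⁄dX K H * (Q⁻¹ * Q) := by rw [hHQ]; ring
      _ = X * d⁄dX K H := by rw [PowerSeries.inv_mul_cancel Q hQ, mul_one]
  have hLs (n : ℕ) : L.subst s * d⁄dX K s * φ ^ (n + 1) = φ ^ n := by
    have h := congrArg (subst s) hL
    rw [subst_mul hsub, subst_mul hsub, hH, subst_X hsub] at h
    apply mul_left_cancel₀ (X_ne_zero (R := K))
    calc X * (L.subst s * d⁄dX K s * φ ^ (n + 1))
        = L.subst s * X * d⁄dX K s * φ ^ (n + 1) := by ring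
      _ = s * φ * ((d⁄dX K H).subst s * d⁄dX K s) * φ ^ n := by rw [h]; ring
      _ = X * φ ^ n := by rw [hφ, hchain, mul_one]
  suffices hE : mk (fun n => coeff n (φ ^ n)) = L by rw [hE, hL]
  ext n
  rw [coeff_mk, ← coeff_subst_mul_derivative_mul_pow hs hφ L n, hLs]

end Field

end PowerSeries

theorem coeff_arsinhSeriesR_of_even {k : ℕ} (hk : Even k) : coeff k arsinhSeriesR = 0 := by
  rw [arsinhSeriesR, coeff_mk, if_neg (Nat.not_odd_iff_even.mpr hk)]

theorem coeff_arsinhSeriesR_two_mul_add_one (i : ℕ) :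
    coeff (2 * i + 1) arsinhSeriesR =
      (-1) ^ i * (2 * i).factorial / (4 ^ i * (i.factorial : ℝ) ^ 2 * (2 * i + 1)) := by
  rw [arsinhSeriesR, coeff_mk, if_pos (odd_two_mul_add_one i),
    show (2 * i + 1) / 2 = i by omega, Nat.add_sub_cancel]
  push_cast
  ring

theorem coeff_arsinhSeriesR_add_two (n : ℕ) :
    coeff (n + 2) arsinhSeriesR * ((n + 2) * (n + 1)) = -(n ^ 2 * coeff n arsinhSeriesR) := by
  rcases Nat.even_or_odd n with hn | ⟨i, rfl⟩
  · rw [coeff_arsinhSeriesR_of_even hn, coeff_arsinhSeriesR_of_even (hn.add even_two)]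
    ring
  · rw [show 2 * i + 1 + 2 = 2 * (i + 1) + 1 by ring, coeff_arsinhSeriesR_two_mul_add_one,
      coeff_arsinhSeriesR_two_mul_add_one, Nat.mul_succ, Nat.factorial_succ, Nat.factorial_succ,
      Nat.factorial_succ]
    push_cast
    field_simp
    ring

theorem derivative_arsinhSeriesR_ode :
    d⁄dX ℝ (d⁄dX ℝ arsinhSeriesR) + X * d⁄dX ℝ (X * d⁄dX ℝ arsinhSeriesR) = 0 := by
  ext (_ | n)
  · simp only [map_add, coeff_zero_X_mul, coeff_derivative]
    simpa using coeff_arsinhSeriesR_of_even even_two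
  · have h := coeff_arsinhSeriesR_add_two (n + 1)
    simp only [map_add, coeff_succ_X_mul, coeff_derivative, map_zero]
    push_cast at h ⊢
    linear_combination h

theorem one_add_X_sq_mul_derivative_arsinhSeriesR_sq :
    (1 + X ^ 2) * (d⁄dX ℝ arsinhSeriesR) ^ 2 = 1 := by
  refine derivative.ext ?_ ?_
  · have h := derivative_arsinhSeriesR_ode
    simp only [Derivation.leibniz, derivative_pow, smul_eq_mul, map_add, derivative_X,
      Derivation.map_one_eq_zero] at h ⊢
    linear_combination 2 * d⁄dX ℝ arsinhSeriesR * h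
  · have h := coeff_arsinhSeriesR_two_mul_add_one 0
    rw [map_mul, map_add, map_pow, map_pow, constantCoeff_X, map_one,
      ← coeff_zero_eq_constantCoeff_apply, coeff_derivative]
    simp_all

-- `S = sinh T` and `C = cosh T`, described by the differential relations they satisfy.
theorem arsinhSeriesR_subst_eq {S C T : ℝ⟦X⟧} (hS : constantCoeff S = 0)
    (hT : constantCoeff T = 0) (hC : constantCoeff C = 1) (hCS : C ^ 2 = 1 + S ^ 2)
    (hdS : d⁄dX ℝ S = C * d⁄dX ℝ T) :
    arsinhSeriesR.subst S = T := by
  have hsub : HasSubst S := HasSubst.of_constantCoeff_zero' hS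
  have hsq : ((d⁄dX ℝ arsinhSeriesR).subst S * C) ^ 2 = 1 := by
    have h := congrArg (substAlgHom hsub) one_add_X_sq_mul_derivative_arsinhSeriesR_sq
    simp only [map_mul, map_add, map_pow, map_one, substAlgHom_X, coe_substAlgHom] at h
    rw [mul_pow, hCS]
    linear_combination h
  have hone : (d⁄dX ℝ arsinhSeriesR).subst S * C = 1 := by
    refine (sq_eq_one_iff.mp hsq).resolve_right fun h => ?_
    have h0 := congrArg constantCoeff h
    rw [map_mul, hC, mul_one, constantCoeff_subst_of_constantCoeff_eq_zero hS,
      ← coeff_zero_eq_constantCoeff_apply, coeff_derivative] at h0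
    have h1 := coeff_arsinhSeriesR_two_mul_add_one 0
    norm_num at h0 h1
    linarith
  refine derivative.ext ?_ ?_
  · rw [derivative_subst hsub, hdS, ← mul_assoc, hone, one_mul]
  · rw [constantCoeff_subst_of_constantCoeff_eq_zero hS, hT, ← coeff_zero_eq_constantCoeff_apply,
      coeff_arsinhSeriesR_of_even ⟨0, rfl⟩]

noncomputable def twoCoshHalf : ℝ⟦X⟧ :=
  rescale (1 / 2 : ℝ) (exp ℝ) + rescale (-(1 / 2) : ℝ) (exp ℝ)

theorem map_twoSinhHalf :
    map (algebraMap ℚ ℝ) twoSinhHalf =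
      rescale (1 / 2 : ℝ) (exp ℝ) - rescale (-(1 / 2) : ℝ) (exp ℝ) := by
  rw [twoSinhHalf, map_sub, ← rescale_map, ← rescale_map, map_exp]
  norm_num

theorem derivative_map_twoSinhHalf :
    d⁄dX ℝ (map (algebraMap ℚ ℝ) twoSinhHalf) = C (1 / 2 : ℝ) * twoCoshHalf := by
  rw [map_twoSinhHalf, twoCoshHalf, map_sub, derivative_rescale, derivative_rescale, derivative_exp,
    map_neg]
  ring

theorem twoCoshHalf_sq : twoCoshHalf ^ 2 = 4 + (map (algebraMap ℚ ℝ) twoSinhHalf) ^ 2 := by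
  have h := exp_mul_exp_eq_exp_add (1 / 2 : ℝ) (-(1 / 2))
  rw [add_neg_cancel, rescale_zero_apply, constantCoeff_exp, map_one] at h
  rw [map_twoSinhHalf, twoCoshHalf]
  linear_combination 4 * h

theorem constantCoeff_map_twoSinhHalf :
    constantCoeff (map (algebraMap ℚ ℝ) twoSinhHalf) = 0 := by
  simp [map_twoSinhHalf, constantCoeff_rescale]

theorem two_mul_rescale_arsinhSeriesR_subst_twoSinhHalf :
    (2 * rescale (1 / 2 : ℝ) arsinhSeriesR).subst (map (algebraMap ℚ ℝ) twoSinhHalf) = X := by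
  set s := map (algebraMap ℚ ℝ) twoSinhHalf
  have hs : constantCoeff s = 0 := constantCoeff_map_twoSinhHalf
  have hsub : HasSubst s := HasSubst.of_constantCoeff_zero' hs
  have hds : d⁄dX ℝ s = C (1 / 2 : ℝ) * twoCoshHalf := derivative_map_twoSinhHalf
  have hhalf : C (1 / 2 : ℝ) * 2 = 1 := by
    rw [← map_ofNat C 2, ← map_mul]
    norm_num
  have h := arsinhSeriesR_subst_eq (S := C (1 / 2 : ℝ) * s) (C := C (1 / 2 : ℝ) * twoCoshHalf)
    (T := C (1 / 2 : ℝ) * X) (by simp [hs]) (by simp)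
    (by simp [twoCoshHalf, constantCoeff_rescale]; norm_num)
    (by linear_combination C (1 / 2 : ℝ) ^ 2 * twoCoshHalf_sq + (C (1 / 2 : ℝ) * 2 + 1) * hhalf)
    (by simp only [Derivation.leibniz, derivative_C, hds, derivative_X, smul_eq_mul]; ring)
  rw [← coe_substAlgHom hsub, map_mul, map_ofNat, coe_substAlgHom, subst_rescale hsub,
    Algebra.smul_def, algebraMap_eq, h]
  linear_combination X * hhalf

theorem D_eq_derivative (f : ℝ⟦X⟧) : D f = d⁄dX ℝ f := by
  ext n
  rw [D, coeff_mk, coeff_derivative]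
  push_cast
  ring

/-- Weingart's generating function: with `a_n = [t^n]((t/(2 sinh(t/2)))^n)` and
`η_n = 2 a_n ρ^n`, the identity
`(1 + (1/2) Σ_{n≥1} η_n z^n) · G_ρ(z) = z · G_ρ'(z)` holds in `ℝ[[z]]`,
where `G_ρ(z) = 2·arcsinh(ρz/2)` as a power series. -/
theorem weingart_generating_function
    (ρ : ℝ) (φ : PowerSeries ℚ) (hφ : φ * twoSinhHalf = PowerSeries.X) :
    (PowerSeries.mk fun n =>
        if n = 0 then (1 : ℝ)
        else (1 / 2) * (2 * ((PowerSeries.coeff (R := ℚ) n (φ ^ n) : ℚ) : ℝ) * ρ ^ n))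
      * (2 * PowerSeries.rescale (ρ / 2) arsinhSeriesR)
    = PowerSeries.X * D (2 * PowerSeries.rescale (ρ / 2) arsinhSeriesR) := by
  have hsφ : map (algebraMap ℚ ℝ) twoSinhHalf * map (algebraMap ℚ ℝ) φ = X := by
    rw [← map_mul, mul_comm, hφ, map_X]
  have hρ1 := mk_coeff_pow_mul_eq_X_mul_derivative constantCoeff_map_twoSinhHalf hsφ
    two_mul_rescale_arsinhSeriesR_subst_twoSinhHalf
  have hG : rescale ρ (2 * rescale (1 / 2 : ℝ) arsinhSeriesR) =
      2 * rescale (ρ / 2) arsinhSeriesR := by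
    rw [map_mul, map_ofNat, rescale_rescale, one_div_mul_eq_div]
  have hE : (mk fun n => if n = 0 then (1 : ℝ)
        else (1 / 2) * (2 * ((coeff n (φ ^ n) : ℚ) : ℝ) * ρ ^ n))
      = rescale ρ (mk fun n => coeff n (map (algebraMap ℚ ℝ) φ ^ n)) := by
    ext n
    rw [coeff_rescale, coeff_mk, coeff_mk, ← map_pow, coeff_map, eq_ratCast]
    split_ifs with hn
    · simp [hn]
    · ring
  rw [D_eq_derivative, hE, ← hG, ← map_mul, hρ1, rescale_X_mul_derivative]
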